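/- arXiv:2601.20774 — 5 statements merged into one kernel-verified Lean document; each statement's English description precedes it below -/
import Mathlib

section
/- Let n ≥ 1, N ≥ 2 and ε ∈ [0, 1/2). Let S_1, …, S_{N−1} be i.i.d. Binomial(n, 1/2) random variables and set V = Σ_{t=1}^{N−1} (1/2 + ε)^{S_t} · (1/2 − ε)^{n − S_t}. Then E[1/V] ≤ 2^n / ((N−1) · (1 − 4ε²)^n). -/
/-- The probability mass function of the Binomial(n, p) distribution at `k`. -/
noncomputable def binomPMF (n : ℕ) (p : ℝ) (k : ℕ) : ℝ :=
  (n.choose k : ℝ) * p ^ k * (1 - p) ^ (n - k)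

section aux

variable (n : ℕ) (ε : ℝ)

private lemma pmf_nonneg (k : ℕ) (hε0 : 0 ≤ ε) (hε : ε < 1/2) :
    0 ≤ binomPMF n (1/2) k := by
  unfold binomPMF
  positivity

private lemma half_pow (k : ℕ) (hk : k ≤ n) :
    ((1:ℝ)/2)^k * (1 - 1/2)^(n-k) = (1/2)^n := by
  rw [show (1:ℝ) - 1/2 = 1/2 by norm_num, ← pow_add, Nat.add_sub_cancel' hk]

private lemma sum_pmf_one : ∑ k : Fin (n+1), binomPMF n (1/2) k = 1 := by
  unfold binomPMF
  rw [Fin.sum_univ_eq_sum_range (fun k => (n.choose k : ℝ) * (1/2)^k * (1 - 1/2)^(n-k))]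
  have : ∀ k ∈ Finset.range (n+1),
      (n.choose k : ℝ) * (1/2)^k * (1 - 1/2)^(n-k) = (n.choose k : ℝ) * (1/2)^n := by
    intro k hk
    rw [Finset.mem_range] at hk
    rw [mul_assoc, half_pow n k (Nat.lt_succ_iff.mp hk)]
  rw [Finset.sum_congr rfl this, ← Finset.sum_mul]
  rw [← Nat.cast_sum, Nat.sum_range_choose]
  push_cast
  rw [div_pow, one_pow]
  field_simp

private lemma sum_pmf_gtilde (hε0 : 0 ≤ ε) (hε : ε < 1/2) :
    ∑ k : Fin (n+1), binomPMF n (1/2) k * ((1/2+ε)^(n-(k:ℕ)) * (1/2-ε)^(k:ℕ))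
      = (1/2)^n := by
  unfold binomPMF
  rw [Fin.sum_univ_eq_sum_range
    (fun k => (n.choose k : ℝ) * (1/2)^k * (1 - 1/2)^(n-k) * ((1/2+ε)^(n-k) * (1/2-ε)^k))]
  have key : ∀ k ∈ Finset.range (n+1),
      (n.choose k : ℝ) * (1/2)^k * (1 - 1/2)^(n-k) * ((1/2+ε)^(n-k) * (1/2-ε)^k)
        = (1/2)^n * ((1/2-ε)^k * (1/2+ε)^(n-k) * (n.choose k : ℝ)) := by
    intro k hk
    rw [Finset.mem_range] at hk
    have hk' : k ≤ n := Nat.lt_succ_iff.mp hk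
    have : (1:ℝ)/2 = 1 - 1/2 := by norm_num
    have h2 : ((1:ℝ)/2)^k * (1 - 1/2)^(n-k) = (1/2)^n := by
      rw [← this, ← pow_add]
      congr 1
      omega
    calc (n.choose k : ℝ) * (1/2)^k * (1 - 1/2)^(n-k) * ((1/2+ε)^(n-k) * (1/2-ε)^k)
        = ((1/2)^k * (1 - 1/2)^(n-k)) * ((1/2-ε)^k * (1/2+ε)^(n-k) * (n.choose k : ℝ)) := by
          ring
      _ = (1/2)^n * ((1/2-ε)^k * (1/2+ε)^(n-k) * (n.choose k : ℝ)) := by rw [h2]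
  rw [Finset.sum_congr rfl key, ← Finset.mul_sum, ← add_pow (1/2-ε) (1/2+ε) n]
  norm_num

end aux

/-- bound on `E[1/V1]` from the proof of Theorem 4.2 of the paper.
Let `n ≥ 1`, `N ≥ 2`, `ε ∈ [0,1/2)`.  If `S_1,…,S_{N−1}` are i.i.d.
`Binomial(n,1/2)` and `V = Σ_t (1/2+ε)^{S_t}(1/2−ε)^{n−S_t}`, then
`E[1/V] ≤ 2^n / ((N−1)·(1−4ε²)^n)`. -/
theorem stmt3 (n N : ℕ) (hn : 1 ≤ n) (hN : 2 ≤ N) (ε : ℝ) (hε0 : 0 ≤ ε)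
    (hε : ε < 1/2) :
    ∑ s : Fin (N-1) → Fin (n+1),
        (∏ t, binomPMF n (1/2) (s t)) *
          (∑ t, (1/2 + ε) ^ ((s t : ℕ)) * (1/2 - ε) ^ (n - (s t : ℕ)))⁻¹
      ≤ (2:ℝ) ^ n / (((N:ℝ) - 1) * (1 - 4*ε^2) ^ n) := by
  set m := N - 1 with hm
  have hm1 : 1 ≤ m := by omega
  have hmpos : (0:ℝ) < m := by positivity
  have ha : (0:ℝ) < 1/2 + ε := by linarith
  have hb : (0:ℝ) < 1/2 - ε := by linarith
  set g : Fin (n+1) → ℝ := fun k => (1/2 + ε) ^ ((k:ℕ)) * (1/2 - ε) ^ (n - (k:ℕ)) with hg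
  set gt : Fin (n+1) → ℝ := fun k => (1/2 + ε) ^ (n - (k:ℕ)) * (1/2 - ε) ^ ((k:ℕ)) with hgt
  set c : ℝ := ((1/2+ε)*(1/2-ε))^n with hc
  have hcpos : 0 < c := by positivity
  have hggt : ∀ k : Fin (n+1), g k * gt k = c := by
    intro k
    have hk : (k:ℕ) ≤ n := Nat.lt_succ_iff.mp k.isLt
    have e1 : (k:ℕ) + (n - (k:ℕ)) = n := by omega
    have e2 : (n - (k:ℕ)) + (k:ℕ) = n := by omega
    simp only [hg, hgt, hc, mul_pow]
    calc (1/2+ε)^((k:ℕ)) * (1/2-ε)^(n-(k:ℕ)) * ((1/2+ε)^(n-(k:ℕ)) * (1/2-ε)^((k:ℕ)))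
        = ((1/2+ε)^((k:ℕ)) * (1/2+ε)^(n-(k:ℕ))) * ((1/2-ε)^(n-(k:ℕ)) * (1/2-ε)^((k:ℕ))) := by
          ring
      _ = (1/2+ε)^n * (1/2-ε)^n := by rw [← pow_add, ← pow_add, e1, e2]
  have hgpos : ∀ k, 0 < g k := fun k => by simp only [hg]; positivity
  have hgtpos : ∀ k, 0 < gt k := fun k => by simp only [hgt]; positivity
  -- pointwise bound: (∑ g)⁻¹ ≤ (∑ gt) / (m² c)
  have pointwise : ∀ s : Fin m → Fin (n+1),
      (∑ t, g (s t))⁻¹ ≤ (∑ t, gt (s t)) / ((m:ℝ)^2 * c) := by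
    intro s
    set A := ∑ t, g (s t) with hA
    set B := ∑ t, gt (s t) with hB
    have hApos : 0 < A := Finset.sum_pos (fun t _ => hgpos (s t)) ⟨⟨0, hm1⟩, Finset.mem_univ _⟩
    have hBpos : 0 < B := Finset.sum_pos (fun t _ => hgtpos (s t)) ⟨⟨0, hm1⟩, Finset.mem_univ _⟩
    have cs : ((m:ℝ)^2 * c) ≤ A * B := by
      have := Finset.sum_sq_le_sum_mul_sum_of_sq_eq_mul (Finset.univ : Finset (Fin m))
        (r := fun _ => Real.sqrt c) (f := fun t => g (s t)) (g := fun t => gt (s t))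
        (fun t _ => (hgpos (s t)).le) (fun t _ => (hgtpos (s t)).le)
        (fun t _ => by rw [Real.sq_sqrt hcpos.le, hggt])
      simpa [Finset.sum_const, mul_pow, Real.sq_sqrt hcpos.le, Finset.card_univ] using this
    have h1 : A⁻¹ = B / (A * B) := by
      field_simp
    rw [h1]
    gcongr
  -- expectation of gt sum
  have exp_gt : ∑ s : Fin m → Fin (n+1), (∏ t, binomPMF n (1/2) (s t)) * (∑ t, gt (s t))
      = (m:ℝ) * (1/2)^n := by
    have step : ∀ s : Fin m → Fin (n+1),
        (∏ t, binomPMF n (1/2) (s t)) * (∑ t, gt (s t))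
          = ∑ t₀ : Fin m, ∏ t, (binomPMF n (1/2) (s t) * if t = t₀ then gt (s t) else 1) := by
      intro s
      rw [Finset.mul_sum]
      congr 1
      ext t₀
      rw [Finset.prod_mul_distrib]
      congr 1
      simp [Finset.prod_ite_eq' Finset.univ t₀ (fun t => gt (s t))]
    simp_rw [step]
    rw [Finset.sum_comm]
    have inner : ∀ t₀ : Fin m,
        (∑ s : Fin m → Fin (n+1), ∏ t, (binomPMF n (1/2) (s t) * if t = t₀ then gt (s t) else 1))
          = (1/2)^n := by
      intro t₀
      rw [← Fintype.prod_sum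
        (fun (t : Fin m) (k : Fin (n+1)) => binomPMF n (1/2) (k:ℕ) * if t = t₀ then gt k else 1)]
      have : ∀ t : Fin m, (∑ k : Fin (n+1), binomPMF n (1/2) k * if t = t₀ then gt k else 1)
          = if t = t₀ then (1/2)^n else 1 := by
        intro t
        by_cases h : t = t₀
        · simp only [h, if_true]
          exact sum_pmf_gtilde n ε hε0 hε
        · simp only [h, if_false, mul_one]
          exact sum_pmf_one n
      rw [Finset.prod_congr rfl (fun t _ => this t)]
      simp
    rw [Finset.sum_congr rfl (fun t₀ _ => inner t₀), Finset.sum_const, Finset.card_univ]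
    simp [mul_comm]
  -- combine
  have hpmf_prod_nonneg : ∀ s : Fin m → Fin (n+1), 0 ≤ ∏ t, binomPMF n (1/2) (s t) :=
    fun s => Finset.prod_nonneg (fun t _ => pmf_nonneg n ε (s t) hε0 hε)
  calc ∑ s : Fin m → Fin (n+1), (∏ t, binomPMF n (1/2) (s t)) * (∑ t, g (s t))⁻¹
      ≤ ∑ s : Fin m → Fin (n+1),
          (∏ t, binomPMF n (1/2) (s t)) * ((∑ t, gt (s t)) / ((m:ℝ)^2 * c)) := by
        apply Finset.sum_le_sum
        intro s _
        exact mul_le_mul_of_nonneg_left (pointwise s) (hpmf_prod_nonneg s)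
    _ = (∑ s : Fin m → Fin (n+1), (∏ t, binomPMF n (1/2) (s t)) * (∑ t, gt (s t)))
          / ((m:ℝ)^2 * c) := by
        rw [Finset.sum_div]
        congr 1
        ext s
        ring
    _ = ((m:ℝ) * (1/2)^n) / ((m:ℝ)^2 * c) := by rw [exp_gt]
    _ ≤ (2:ℝ) ^ n / (((N:ℝ) - 1) * (1 - 4*ε^2) ^ n) := by
        have hNm : ((N:ℝ) - 1) = (m:ℝ) := by
          rw [hm, Nat.cast_sub (by omega : 1 ≤ N)]
          norm_num
        have hc4 : ((1:ℝ) - 4*ε^2)^n = 4^n * c := by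
          rw [hc, ← mul_pow]; congr 1; ring
        rw [hNm, hc4]
        apply le_of_eq
        have hmne : (m:ℝ) ≠ 0 := ne_of_gt hmpos
        have hcne : c ≠ 0 := ne_of_gt hcpos
        have h2n : ((1:ℝ)/2)^n = ((2:ℝ)^n)⁻¹ := by rw [div_pow, one_pow, one_div]
        have h4n : ((4:ℝ))^n = 2^n * 2^n := by rw [show (4:ℝ) = 2*2 by norm_num, mul_pow]
        rw [h2n, h4n]
        have h2ne : ((2:ℝ)^n) ≠ 0 := by positivity
        field_simp
end

section
/- Let X, Y, Z be almost surely positive real-valued random variables on a common probability space such that X is independent of Z, E[X] < ∞ and E[1/Z] < ∞. Then E[log((Z + X)/(Z + Y))] ≤ E[X] · E[1/Z] (the left-hand expectation being well-defined in [−∞, ∞) since the integrand is bounded above by X/Z). -/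
/-!
Pointwise, `log a ≤ a - 1` gives `log ((Z + X) / (Z + Y)) ≤ (X - Y) / (Z + Y) ≤ X / Z`, and
independence of `X` and `1 / Z` gives `E[X / Z] = E[X] · E[1 / Z]`.
-/

open MeasureTheory ProbabilityTheory

lemma Real.log_div_add_le_div {x y z : ℝ} (hx : 0 ≤ x) (hy : 0 ≤ y) (hz : 0 < z) :
    Real.log ((z + x) / (z + y)) ≤ x / z := by
  have hzy : 0 < z + y := by positivity
  calc Real.log ((z + x) / (z + y))
      ≤ (z + x) / (z + y) - 1 := Real.log_le_sub_one_of_pos (by positivity)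
    _ = (x - y) / (z + y) := by field_simp; ring
    _ ≤ x / (z + y) := by gcongr; linarith
    _ ≤ x / z := by gcongr; linarith

/-- The upper function `g` need not bound an integrable `f`: a non-integrable `f` has integral
`0 ≤ ∫ g`. -/
lemma MeasureTheory.integral_le_integral_of_ae_le_of_nonneg {α : Type*} [MeasurableSpace α]
    {μ : Measure α} {f g : α → ℝ} (hg : Integrable g μ) (hg_nonneg : 0 ≤ᵐ[μ] g)
    (hfg : f ≤ᵐ[μ] g) : ∫ a, f a ∂μ ≤ ∫ a, g a ∂μ := by
  by_cases hf : Integrable f μ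
  · exact integral_mono_ae hf hg hfg
  · rw [integral_undef hf]
    exact integral_nonneg_of_ae hg_nonneg

theorem stmt4_general {Ω : Type*} [MeasurableSpace Ω] (μ : Measure Ω) [IsProbabilityMeasure μ]
    (X Y Z : Ω → ℝ)
    (hX : ∀ᵐ ω ∂μ, 0 < X ω) (hY : ∀ᵐ ω ∂μ, 0 < Y ω) (hZ : ∀ᵐ ω ∂μ, 0 < Z ω)
    (hindep : IndepFun X Z μ)
    (hXint : Integrable X μ) (hZint : Integrable (fun ω => (Z ω)⁻¹) μ) :
    ∫ ω, Real.log ((Z ω + X ω) / (Z ω + Y ω)) ∂μ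
      ≤ (∫ ω, X ω ∂μ) * ∫ ω, (Z ω)⁻¹ ∂μ := by
  have hindep_inv : IndepFun X (fun ω => (Z ω)⁻¹) μ := hindep.comp measurable_id measurable_inv
  rw [← hindep_inv.integral_fun_mul_eq_mul_integral hXint.aestronglyMeasurable
    hZint.aestronglyMeasurable]
  refine integral_le_integral_of_ae_le_of_nonneg (hindep_inv.integrable_mul hXint hZint) ?_ ?_
  · filter_upwards [hX, hZ] with ω hx hz
    positivity
  · filter_upwards [hX, hY, hZ] with ω hx hy hz
    simpa only [div_eq_mul_inv] using Real.log_div_add_le_div hx.le hy.le hz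

/-- the key mixture-likelihood-ratio inequality used in the proof
of Theorem 4.2 of the paper.  Let `X, Y, Z` be almost surely positive random
variables with `X` independent of `Z`, `E[X] < ∞` and `E[1/Z] < ∞`.  Then
`E[log((Z+X)/(Z+Y))] ≤ E[X]·E[1/Z]`. -/
theorem stmt4 {Ω : Type*} [MeasurableSpace Ω] (μ : Measure Ω) [IsProbabilityMeasure μ]
    (X Y Z : Ω → ℝ) (hXm : Measurable X) (hYm : Measurable Y) (hZm : Measurable Z)
    (hX : ∀ᵐ ω ∂μ, 0 < X ω) (hY : ∀ᵐ ω ∂μ, 0 < Y ω) (hZ : ∀ᵐ ω ∂μ, 0 < Z ω)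
    (hindep : IndepFun X Z μ)
    (hXint : Integrable X μ) (hZint : Integrable (fun ω => (Z ω)⁻¹) μ) :
    ∫ ω, Real.log ((Z ω + X ω) / (Z ω + Y ω)) ∂μ
      ≤ (∫ ω, X ω ∂μ) * ∫ ω, (Z ω)⁻¹ ∂μ :=
  stmt4_general μ X Y Z hX hY hZ hindep hXint hZint
end

section
/- Let n ≥ 1, N ≥ 2, ε ∈ (0, 1/2). For σ ∈ {0,1}, let P_σ be the law of the random vector (S_1, …, S_N) generated as follows: draw t* uniformly from {1,…,N}; S_{t*} ~ Binomial(n, 1/2 + ε) if σ = 1 and S_{t*} ~ Binomial(n, 1/2 − ε) if σ = 0; and S_t ~ Binomial(n, 1/2) independently for all t ≠ t*. Then the Kullback–Leibler divergence satisfies D_KL(P_1 ‖ P_0) ≤ (1/2 + 2ε²)^n · 2^n / ((N−1) · (1 − 4ε²)^n). -/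
/-- The law of the vector `(S_1,…,S_N)` generated by drawing `t*` uniformly in
`{1,…,N}`, setting `S_{t*} ~ Binomial(n, p)` and `S_t ~ Binomial(n, 1/2)`
independently for `t ≠ t*`. -/
noncomputable def mixLaw (n N : ℕ) (p : ℝ) (s : Fin N → Fin (n+1)) : ℝ :=
  (1 / (N : ℝ)) * ∑ tstar : Fin N,
    binomPMF n p (s tstar) * ∏ t ∈ Finset.univ.erase tstar, binomPMF n (1/2) (s t)

/-! Write `q` for the Binomial(n, 1/2) pmf, `f` and `g` for the likelihood ratios of
Binomial(n, 1/2 ± ε) against `q`, and `Q = ∏ₜ q(sₜ)`. Then `D_KL(P₁ ‖ P₀)` is the average over `i`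
of `E_Q[f(sᵢ) log (∑ₜ f(sₜ) / ∑ₜ g(sₜ))]`. Fix `i` and put `W = ∑_{t ≠ i} f(sₜ)`,
`V = ∑_{t ≠ i} g(sₜ)`. Reflecting `k ↦ n - k` in every coordinate but `i` preserves `Q` and swaps
`W` and `V`; averaging the two resulting expressions and using `log ((a + x) / (b + x)) ≤ a / x`
bounds the term by `E_Q[f(sᵢ)² / V]`. By AM–HM, `1 / V ≤ ∑_{t ≠ i} g(sₜ)⁻¹ / (N - 1)²`, and
independence of the coordinates gives `E_q[f²] E_q[1/g] / (N - 1)`, where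
`E_q[f²] = (1 + 4ε²)ⁿ` and `E_q[1/g] = (1 - 4ε²)⁻ⁿ`. -/

open Finset Real

lemma log_add_div_add_le {a b x : ℝ} (ha : 0 ≤ a) (hb : 0 ≤ b) (hx : 0 < x) :
    log ((a + x) / (b + x)) ≤ a / x :=
  calc log ((a + x) / (b + x)) ≤ (a + x) / (b + x) - 1 := log_le_sub_one_of_pos (by positivity)
    _ = (a - b) / (b + x) := by field_simp; ring
    _ ≤ a / x := by rw [div_le_div_iff₀ (by positivity) hx]; nlinarith

lemma log_div_add_log_div_le {a b v w : ℝ} (ha : 0 ≤ a) (hb : 0 ≤ b) (hv : 0 < v) (hw : 0 < w) :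
    log ((a + w) / (b + v)) + log ((a + v) / (b + w)) ≤ a / v + a / w := by
  have hswap : log ((a + w) / (b + v)) + log ((a + v) / (b + w))
      = log ((a + v) / (b + v)) + log ((a + w) / (b + w)) := by
    rw [← log_mul (by positivity) (by positivity), ← log_mul (by positivity) (by positivity)]
    congr 1
    ring
  rw [hswap]
  exact add_le_add (log_add_div_add_le ha hb hv) (log_add_div_add_le ha hb hw)

lemma sum_mul_prod_erase_eq {ι R : Type*} [Fintype ι] [DecidableEq ι] [Field R] (a q : ι → R)
    (hq : ∀ t, q t ≠ 0) : ∑ τ, a τ * ∏ t ∈ univ.erase τ, q t = (∏ t, q t) * ∑ τ, a τ / q τ := by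
  rw [mul_sum]
  refine sum_congr rfl fun τ _ => ?_
  rw [← mul_prod_erase univ q (mem_univ τ)]
  field_simp [hq τ]

section ProductSpace

variable {ι α : Type*} [DecidableEq ι]

def mapExcept (ρ : Equiv.Perm α) (i : ι) : Equiv.Perm (ι → α) :=
  Equiv.piCongrRight fun t => if t = i then 1 else ρ

lemma mapExcept_apply (ρ : Equiv.Perm α) (i : ι) (s : ι → α) (t : ι) :
    mapExcept ρ i s t = if t = i then s t else ρ (s t) := by
  by_cases h : t = i <;> simp [mapExcept, h]

variable [Fintype ι] [Fintype α] {q f g : α → ℝ}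

lemma sum_prod_mul_mul_of_ne (hq : ∑ k, q k = 1) {i j : ι} (hij : i ≠ j) (u v : α → ℝ) :
    ∑ s : ι → α, (∏ t, q (s t)) * u (s i) * v (s j) = (∑ k, q k * u k) * ∑ k, q k * v k := by
  set h : ι → α → ℝ := fun t k => q k * ((if t = i then u k else 1) * (if t = j then v k else 1))
  have hsum : ∀ t, ∑ k, h t k
      = (if t = i then ∑ k, q k * u k else 1) * (if t = j then ∑ k, q k * v k else 1) := by
    intro t
    by_cases hi : t = i
    · subst hi; simp [h, hij]
    · by_cases hj : t = j
      · subst hj; simp [h, hi]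
      · simp [h, hi, hj, hq]
  calc ∑ s : ι → α, (∏ t, q (s t)) * u (s i) * v (s j)
      = ∑ s : ι → α, ∏ t, h t (s t) := by
        simp only [h, prod_mul_distrib, Fintype.prod_ite_eq', mul_assoc]
    _ = ∏ t, ∑ k, h t k := (Fintype.prod_sum h).symm
    _ = _ := by simp only [hsum, prod_mul_distrib, Fintype.prod_ite_eq']

lemma sum_mul_log_le_sum_sq_div (hq : ∀ a, 0 ≤ q a) (hf : ∀ a, 0 < f a) (hg : ∀ a, 0 < g a)
    (ρ : Equiv.Perm α) (hqρ : ∀ a, q (ρ a) = q a) (hfρ : ∀ a, f (ρ a) = g a)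
    (hgρ : ∀ a, g (ρ a) = f a) {i : ι} (hi : (univ.erase i).Nonempty) :
    ∑ s : ι → α, (∏ t, q (s t)) * f (s i) * log ((∑ t, f (s t)) / ∑ t, g (s t))
      ≤ ∑ s : ι → α, (∏ t, q (s t)) * f (s i) ^ 2 / ∑ t ∈ univ.erase i, g (s t) := by
  set Q : (ι → α) → ℝ := fun s => ∏ t, q (s t)
  set W : (ι → α) → ℝ := fun s => ∑ t ∈ univ.erase i, f (s t)
  set V : (ι → α) → ℝ := fun s => ∑ t ∈ univ.erase i, g (s t)
  set σ := mapExcept ρ i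
  have hσi (s) : σ s i = s i := by simp [σ, mapExcept_apply]
  have hσQ (s) : Q (σ s) = Q s :=
    prod_congr rfl fun t _ => by by_cases h : t = i <;> simp [σ, mapExcept_apply, h, hqρ]
  have hσW (s) : W (σ s) = V s :=
    sum_congr rfl fun t ht => by simp [σ, mapExcept_apply, ne_of_mem_erase ht, hfρ]
  have hσV (s) : V (σ s) = W s :=
    sum_congr rfl fun t ht => by simp [σ, mapExcept_apply, ne_of_mem_erase ht, hgρ]
  have hW (s) : 0 < W s := sum_pos (fun t _ => hf _) hi
  have hV (s) : 0 < V s := sum_pos (fun t _ => hg _) hi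
  have hsplit : ∀ s, Q s * f (s i) * log ((∑ t, f (s t)) / ∑ t, g (s t))
      = Q s * f (s i) * log ((f (s i) + W s) / (g (s i) + V s)) := fun s => by
    rw [← add_sum_erase _ _ (mem_univ i), ← add_sum_erase _ (fun t => g (s t)) (mem_univ i)]
  have hflip : ∑ s, Q s * f (s i) * log ((f (s i) + W s) / (g (s i) + V s))
      = ∑ s, Q s * f (s i) * log ((f (s i) + V s) / (g (s i) + W s)) := by
    rw [← Equiv.sum_comp σ]
    simp only [hσi, hσQ, hσW, hσV]
  have hflip_sq : ∑ s, Q s * f (s i) ^ 2 / W s = ∑ s, Q s * f (s i) ^ 2 / V s := by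
    rw [← Equiv.sum_comp σ]
    simp only [hσi, hσQ, hσW]
  have hpair (s) : Q s * f (s i) * log ((f (s i) + W s) / (g (s i) + V s))
      + Q s * f (s i) * log ((f (s i) + V s) / (g (s i) + W s))
      ≤ Q s * f (s i) ^ 2 / V s + Q s * f (s i) ^ 2 / W s := by
    have hQf : 0 ≤ Q s * f (s i) := mul_nonneg (prod_nonneg fun t _ => hq _) (hf _).le
    calc _ = Q s * f (s i) * (log ((f (s i) + W s) / (g (s i) + V s))
            + log ((f (s i) + V s) / (g (s i) + W s))) := by ring
      _ ≤ Q s * f (s i) * (f (s i) / V s + f (s i) / W s) :=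
          mul_le_mul_of_nonneg_left
            (log_div_add_log_div_le (hf _).le (hg _).le (hV s) (hW s)) hQf
      _ = _ := by ring
  rw [sum_congr rfl fun s _ => hsplit s]
  have hsum := sum_le_sum fun s (_ : s ∈ univ) => hpair s
  rw [sum_add_distrib, sum_add_distrib, ← hflip, hflip_sq] at hsum
  linarith

lemma sum_sq_div_sum_erase_le (hq1 : ∑ k, q k = 1) (hq : ∀ a, 0 ≤ q a) (hg : ∀ a, 0 < g a)
    {i : ι} (hi : (univ.erase i).Nonempty) (u : α → ℝ) :
    ∑ s : ι → α, (∏ t, q (s t)) * u (s i) ^ 2 / ∑ t ∈ univ.erase i, g (s t)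
      ≤ (∑ k, q k * u k ^ 2) * (∑ k, q k / g k) / (Fintype.card ι - 1) := by
  set m : ℝ := ((univ.erase i).card : ℝ)
  have hm : m = Fintype.card ι - 1 := by
    rw [show m = #(univ.erase i) from rfl, card_erase_of_mem (mem_univ i),
      Nat.cast_sub (card_pos.2 ⟨i, mem_univ i⟩), card_univ, Nat.cast_one]
  have hm0 : 0 < m := by simpa [m] using hi.card_pos
  have hamhm (s : ι → α) :
      (∑ t ∈ univ.erase i, g (s t))⁻¹ ≤ (∑ t ∈ univ.erase i, (g (s t))⁻¹) / m ^ 2 := by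
    have := sq_sum_div_le_sum_sq_div (univ.erase i) (fun _ => (1 : ℝ)) fun t _ => hg (s t)
    simp only [sum_const, nsmul_eq_mul, mul_one, one_pow, one_div] at this
    rw [le_div_iff₀ (by positivity), ← div_eq_inv_mul]
    linarith
  calc ∑ s : ι → α, (∏ t, q (s t)) * u (s i) ^ 2 / ∑ t ∈ univ.erase i, g (s t)
      ≤ ∑ s : ι → α, (∏ t, q (s t)) * u (s i) ^ 2 * ((∑ t ∈ univ.erase i, (g (s t))⁻¹) / m ^ 2) :=
        sum_le_sum fun s _ => by
          rw [div_eq_mul_inv]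
          exact mul_le_mul_of_nonneg_left (hamhm s)
            (mul_nonneg (prod_nonneg fun t _ => hq _) (sq_nonneg _))
    _ = (∑ t ∈ univ.erase i, ∑ s : ι → α, (∏ t, q (s t)) * u (s i) ^ 2 * (g (s t))⁻¹) / m ^ 2 := by
        simp only [mul_div_assoc', mul_sum, ← sum_div]
        rw [sum_comm]
    _ = m * ((∑ k, q k * u k ^ 2) * (∑ k, q k / g k)) / m ^ 2 := by
        rw [sum_congr rfl fun t ht =>
          sum_prod_mul_mul_of_ne hq1 (ne_of_mem_erase ht).symm (fun k => u k ^ 2) fun k => (g k)⁻¹]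
        simp [m, div_eq_mul_inv]
    _ = _ := by rw [← hm]; field_simp

theorem sum_mul_sum_mul_log_le [Nontrivial ι] (hq1 : ∑ k, q k = 1) (hq : ∀ a, 0 ≤ q a)
    (hf : ∀ a, 0 < f a) (hg : ∀ a, 0 < g a) (ρ : Equiv.Perm α) (hqρ : ∀ a, q (ρ a) = q a)
    (hfρ : ∀ a, f (ρ a) = g a) (hgρ : ∀ a, g (ρ a) = f a) :
    ∑ s : ι → α, (∏ t, q (s t)) * (∑ t, f (s t)) * log ((∑ t, f (s t)) / ∑ t, g (s t))
      ≤ Fintype.card ι * ((∑ k, q k * f k ^ 2) * (∑ k, q k / g k) / (Fintype.card ι - 1)) := by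
  have hi (i : ι) : (univ.erase i).Nonempty :=
    let ⟨j, hj⟩ := exists_ne i
    ⟨j, mem_erase.2 ⟨hj, mem_univ j⟩⟩
  calc _ = ∑ i, ∑ s : ι → α, (∏ t, q (s t)) * f (s i) * log ((∑ t, f (s t)) / ∑ t, g (s t)) := by
        simp only [mul_sum, sum_mul]
        exact sum_comm
    _ ≤ ∑ _i : ι, (∑ k, q k * f k ^ 2) * (∑ k, q k / g k) / (Fintype.card ι - 1) :=
        sum_le_sum fun i _ => (sum_mul_log_le_sum_sq_div hq hf hg ρ hqρ hfρ hgρ (hi i)).trans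
          (sum_sq_div_sum_erase_le hq1 hq hg (hi i) f)
    _ = _ := by simp

end ProductSpace

section Binomial

variable {n : ℕ}

lemma binomPMF_pos {p : ℝ} (h0 : 0 < p) (h1 : p < 1) (k : Fin (n + 1)) : 0 < binomPMF n p k := by
  have hc : (0 : ℝ) < n.choose k := by exact_mod_cast Nat.choose_pos (Fin.is_le k)
  unfold binomPMF
  have : 0 < 1 - p := by linarith
  positivity

lemma binomPMF_rev (p : ℝ) (k : Fin (n + 1)) : binomPMF n p k.rev = binomPMF n (1 - p) k := by
  have hk : (k : ℕ) ≤ n := Fin.is_le k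
  have hrev : (k.rev : ℕ) = n - k := by rw [Fin.val_rev]; omega
  unfold binomPMF
  rw [hrev, Nat.choose_symm hk, Nat.sub_sub_self hk, sub_sub_cancel]
  ring

lemma sum_choose_mul_pow_mul_pow (x y : ℝ) :
    ∑ k : Fin (n + 1), (n.choose k : ℝ) * x ^ (k : ℕ) * y ^ (n - k) = (x + y) ^ n := by
  rw [Fin.sum_univ_eq_sum_range (fun k => (n.choose k : ℝ) * x ^ k * y ^ (n - k)), add_pow]
  exact sum_congr rfl fun k _ => by ring

lemma sum_binomPMF (p : ℝ) : ∑ k : Fin (n + 1), binomPMF n p k = 1 := by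
  simp only [binomPMF, sum_choose_mul_pow_mul_pow, add_sub_cancel, one_pow]

noncomputable def lrBinom (n : ℕ) (p : ℝ) (k : Fin (n + 1)) : ℝ :=
  binomPMF n p k / binomPMF n (1 / 2) k

lemma lrBinom_pos {p : ℝ} (h0 : 0 < p) (h1 : p < 1) (k : Fin (n + 1)) : 0 < lrBinom n p k :=
  div_pos (binomPMF_pos h0 h1 k) (binomPMF_pos (by norm_num) (by norm_num) k)

lemma binomPMF_half_rev (k : Fin (n + 1)) : binomPMF n (1 / 2) k.rev = binomPMF n (1 / 2) k := by
  rw [binomPMF_rev]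
  norm_num

lemma lrBinom_rev {p p' : ℝ} (h : p + p' = 1) (k : Fin (n + 1)) :
    lrBinom n p k.rev = lrBinom n p' k := by
  rw [lrBinom, lrBinom, binomPMF_rev, binomPMF_half_rev, ← h, add_sub_cancel_left]

lemma sum_binomPMF_half_mul_lrBinom_sq (p : ℝ) :
    ∑ k : Fin (n + 1), binomPMF n (1 / 2) k * lrBinom n p k ^ 2
      = (2 * p ^ 2 + 2 * (1 - p) ^ 2) ^ n := by
  rw [← sum_choose_mul_pow_mul_pow]
  refine sum_congr rfl fun k _ => ?_
  have hc : (n.choose k : ℝ) ≠ 0 := by exact_mod_cast (Nat.choose_pos (Fin.is_le k)).ne'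
  unfold lrBinom binomPMF
  rw [show (1 : ℝ) - 1 / 2 = 1 / 2 by norm_num]
  simp only [mul_pow, div_pow, one_div, inv_pow, ← pow_mul]
  field_simp
  ring

lemma sum_binomPMF_half_div_lrBinom {p : ℝ} (h0 : 0 < p) (h1 : p < 1) :
    ∑ k : Fin (n + 1), binomPMF n (1 / 2) k / lrBinom n p k = (4 * p * (1 - p))⁻¹ ^ n := by
  have hx : (1 / 2) ^ 2 / p + (1 / 2) ^ 2 / (1 - p) = (4 * p * (1 - p))⁻¹ := by
    field_simp [(by linarith : (1 - p) ≠ 0)]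
    ring
  rw [← hx, ← sum_choose_mul_pow_mul_pow]
  refine sum_congr rfl fun k _ => ?_
  have hc : (n.choose k : ℝ) ≠ 0 := by exact_mod_cast (Nat.choose_pos (Fin.is_le k)).ne'
  have : 1 - p ≠ 0 := by linarith
  unfold lrBinom binomPMF
  rw [show (1 : ℝ) - 1 / 2 = 1 / 2 by norm_num]
  simp only [div_pow, one_div, inv_pow, ← pow_mul]
  field_simp
  ring

end Binomial

lemma mixLaw_eq (n N : ℕ) (p : ℝ) (s : Fin N → Fin (n + 1)) :
    mixLaw n N p s = (∏ t, binomPMF n (1 / 2) (s t)) * (∑ t, lrBinom n p (s t)) / N := by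
  rw [mixLaw, sum_mul_prod_erase_eq _ (fun t => binomPMF n (1 / 2) (s t))
    fun t => (binomPMF_pos (by norm_num) (by norm_num) _).ne']
  simp only [lrBinom]
  ring

lemma sum_mixLaw_mul_log_eq {n N : ℕ} (hN : N ≠ 0) (p p' : ℝ) :
    ∑ s : Fin N → Fin (n + 1), mixLaw n N p s * log (mixLaw n N p s / mixLaw n N p' s)
      = (∑ s : Fin N → Fin (n + 1), (∏ t, binomPMF n (1 / 2) (s t)) * (∑ t, lrBinom n p (s t))
          * log ((∑ t, lrBinom n p (s t)) / ∑ t, lrBinom n p' (s t))) / N := by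
  rw [sum_div]
  refine sum_congr rfl fun s _ => ?_
  have hQ : (∏ t, binomPMF n (1 / 2) (s t)) ≠ 0 :=
    prod_ne_zero_iff.2 fun t _ => (binomPMF_pos (by norm_num) (by norm_num) _).ne'
  rw [mixLaw_eq, mixLaw_eq, div_div_div_cancel_right₀ (Nat.cast_ne_zero.2 hN),
    mul_div_mul_left _ _ hQ]
  ring

theorem stmt5_general (n N : ℕ) (hN : 2 ≤ N) (ε : ℝ) (hε0 : 0 < ε)
    (hε : ε < 1/2) :
    ∑ s : Fin N → Fin (n+1),
        mixLaw n N (1/2 + ε) s *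
          Real.log (mixLaw n N (1/2 + ε) s / mixLaw n N (1/2 - ε) s)
      ≤ (1/2 + 2*ε^2) ^ n * (2:ℝ) ^ n / (((N:ℝ) - 1) * (1 - 4*ε^2) ^ n) := by
  have : Nontrivial (Fin N) := Fin.nontrivial_iff_two_le.2 hN
  have key := sum_mul_sum_mul_log_le (ι := Fin N) (f := lrBinom n (1 / 2 + ε))
    (g := lrBinom n (1 / 2 - ε)) (sum_binomPMF (1 / 2))
    (fun k => (binomPMF_pos (by norm_num) (by norm_num) k).le)
    (lrBinom_pos (by linarith) (by linarith)) (lrBinom_pos (by linarith) (by linarith))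
    Fin.revPerm binomPMF_half_rev (lrBinom_rev (by ring)) (lrBinom_rev (by ring))
  rw [Fintype.card_fin, sum_binomPMF_half_mul_lrBinom_sq,
    sum_binomPMF_half_div_lrBinom (by linarith) (by linarith)] at key
  have hN1 : (1 : ℝ) < N := by exact_mod_cast hN
  have hε2 : 0 < 1 - 4 * ε ^ 2 := by nlinarith
  calc _ ≤ N * ((2 * (1 / 2 + ε) ^ 2 + 2 * (1 - (1 / 2 + ε)) ^ 2) ^ n
          * (4 * (1 / 2 - ε) * (1 - (1 / 2 - ε)))⁻¹ ^ n / (N - 1)) / N := by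
        rw [sum_mixLaw_mul_log_eq (by omega)]
        gcongr
    _ = _ := by
      rw [show 2 * (1 / 2 + ε) ^ 2 + 2 * (1 - (1 / 2 + ε)) ^ 2 = (1 / 2 + 2 * ε ^ 2) * 2 by ring,
        show 4 * (1 / 2 - ε) * (1 - (1 / 2 - ε)) = 1 - 4 * ε ^ 2 by ring, mul_pow, inv_pow]
      field_simp

/-- the mixture KL-divergence bound at the heart of the proof of
Theorem 4.2 of the paper.  With `P_σ` the law of `(S_1,…,S_N)` where a uniformly
random coordinate is `Binomial(n, 1/2 ± ε)` and the rest are `Binomial(n, 1/2)`,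
`D_KL(P_1 ‖ P_0) ≤ (1/2 + 2ε²)^n · 2^n / ((N−1)·(1−4ε²)^n)`. -/
theorem stmt5 (n N : ℕ) (hn : 1 ≤ n) (hN : 2 ≤ N) (ε : ℝ) (hε0 : 0 < ε)
    (hε : ε < 1/2) :
    ∑ s : Fin N → Fin (n+1),
        mixLaw n N (1/2 + ε) s *
          Real.log (mixLaw n N (1/2 + ε) s / mixLaw n N (1/2 - ε) s)
      ≤ (1/2 + 2*ε^2) ^ n * (2:ℝ) ^ n / (((N:ℝ) - 1) * (1 - 4*ε^2) ^ n) :=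
  stmt5_general n N hN ε hε0 hε
end

section
/- Let m ≥ 1 be an integer and let T_1, …, T_{10m} be i.i.d. uniform random variables on {1, …, m}. For i ∈ {1,…,m} let S_i = #{ j ∈ {1,…,10m} : T_j ≤ i }. Then P( S_i ≥ i for all i ∈ {1,…,m} ) ≥ 0.97. -/
open scoped Classical
section StmtAux
open Finset

lemma aux_card_lt (m i : ℕ) (h : i ≤ m) :
    ((Finset.univ : Finset (Fin m)).filter (fun x : Fin m => (x : ℕ) < i)).card = i := by
  rw [← Finset.card_range i]
  apply Finset.card_bij (fun (x : Fin m) _ => (x : ℕ))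
  · intro a ha; simp only [Finset.mem_filter] at ha; simpa using ha.2
  · intro a _ b _ hab; exact Fin.ext hab
  · intro b hb
    simp only [Finset.mem_range] at hb
    exact ⟨⟨b, lt_of_lt_of_le hb h⟩, by simp [hb], rfl⟩

lemma aux_card_EK (N m i : ℕ) (h : i ≤ m) (K : Finset (Fin N)) :
    (Fintype.piFinset (fun j => if j ∈ K then
        ((Finset.univ : Finset (Fin m)).filter (fun x : Fin m => (x : ℕ) < i))
      else
        ((Finset.univ : Finset (Fin m)).filter (fun x : Fin m => ¬ (x : ℕ) < i)))).card
      = i ^ K.card * (m - i) ^ (N - K.card) := by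
  rw [Fintype.card_piFinset]
  have hA : ((Finset.univ : Finset (Fin m)).filter (fun x : Fin m => (x : ℕ) < i)).card = i :=
    aux_card_lt m i h
  have hB : ((Finset.univ : Finset (Fin m)).filter (fun x : Fin m => ¬ (x : ℕ) < i)).card
      = m - i := by
    have h2 := Finset.card_filter_add_card_filter_not
      (s := (Finset.univ : Finset (Fin m))) (fun x : Fin m => (x : ℕ) < i)
    simp only [Finset.card_univ, Fintype.card_fin] at h2
    omega
  have hcard : ∀ j : Fin N, ((if j ∈ K then
        ((Finset.univ : Finset (Fin m)).filter (fun x : Fin m => (x : ℕ) < i))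
      else
        ((Finset.univ : Finset (Fin m)).filter (fun x : Fin m => ¬ (x : ℕ) < i))).card)
      = if j ∈ K then i else m - i := by
    intro j; split <;> first | exact hA | exact hB
  rw [Finset.prod_congr rfl (fun j _ => hcard j), Finset.prod_ite,
    Finset.prod_const, Finset.prod_const]
  have h1 : (Finset.univ.filter (fun j : Fin N => j ∈ K)) = K := by
    ext j; simp
  have h2 : (Finset.univ.filter (fun j : Fin N => ¬ j ∈ K)).card = N - K.card := by
    have h3 := Finset.card_filter_add_card_filter_not
      (s := (Finset.univ : Finset (Fin N))) (fun j : Fin N => j ∈ K)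
    simp only [Finset.card_univ, Fintype.card_fin, h1] at h3
    omega
  rw [h1, h2]

lemma aux_card_bad (N m i : ℕ) (him : i ≤ m) :
    ((Finset.univ : Finset (Fin N → Fin m)).filter
      (fun T => (Finset.univ.filter (fun j => (T j : ℕ) + 1 ≤ i)).card < i)).card
    ≤ ∑ k ∈ Finset.range i, N.choose k * (i ^ k * (m - i) ^ (N - k)) := by
  classical
  set EK : Finset (Fin N) → Finset (Fin N → Fin m) := fun K =>
    Fintype.piFinset (fun j => if j ∈ K then
        ((Finset.univ : Finset (Fin m)).filter (fun x : Fin m => (x : ℕ) < i))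
      else
        ((Finset.univ : Finset (Fin m)).filter (fun x : Fin m => ¬ (x : ℕ) < i))) with hEK
  have hsub : ((Finset.univ : Finset (Fin N → Fin m)).filter
      (fun T => (Finset.univ.filter (fun j => (T j : ℕ) + 1 ≤ i)).card < i))
      ⊆ (Finset.range i).biUnion (fun k =>
          (Finset.powersetCard k (Finset.univ : Finset (Fin N))).biUnion EK) := by
    intro T hT
    simp only [Finset.mem_filter, Finset.mem_univ, true_and] at hT
    refine Finset.mem_biUnion.2
      ⟨(Finset.univ.filter (fun j => (T j : ℕ) + 1 ≤ i)).card, Finset.mem_range.2 hT, ?_⟩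
    refine Finset.mem_biUnion.2 ⟨Finset.univ.filter (fun j => (T j : ℕ) + 1 ≤ i), ?_, ?_⟩
    · exact Finset.mem_powersetCard_univ.2 rfl
    · rw [hEK]; refine Fintype.mem_piFinset.2 (fun j => ?_)
      by_cases hj : j ∈ Finset.univ.filter (fun j => (T j : ℕ) + 1 ≤ i)
      · simp only [hj, if_true, Finset.mem_filter, Finset.mem_univ, true_and]
        exact (Finset.mem_filter.1 hj).2
      · simp only [hj, if_false, Finset.mem_filter, Finset.mem_univ, true_and]
        intro hc; exact hj (Finset.mem_filter.2 ⟨Finset.mem_univ j, hc⟩)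
  refine le_trans (Finset.card_le_card hsub) (le_trans Finset.card_biUnion_le ?_)
  refine Finset.sum_le_sum (fun k hk => ?_)
  refine le_trans Finset.card_biUnion_le ?_
  have hallK : ∀ K ∈ Finset.powersetCard k (Finset.univ : Finset (Fin N)),
      (EK K).card = i ^ k * (m - i) ^ (N - k) := by
    intro K hK
    have hKc : K.card = k := (Finset.mem_powersetCard.1 hK).2
    rw [hEK]
    rw [aux_card_EK N m i him K, hKc]
  rw [Finset.sum_congr rfl hallK, Finset.sum_const, Finset.card_powersetCard,
    Finset.card_univ, Fintype.card_fin, smul_eq_mul]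

lemma aux_real (m i : ℕ) (hm : 1 ≤ m) (h1 : 1 ≤ i) (him : i ≤ m) :
    (∑ k ∈ Finset.range i,
        (((10*m).choose k : ℝ) * ((i : ℝ) ^ k * ((m : ℝ) - i) ^ (10*m - k))))
      ≤ 10 ^ (i-1) * Real.exp (-(9*i)) * (m : ℝ) ^ (10*m) := by
  have hmpos : (0:ℝ) < m := by exact_mod_cast hm
  have hmi : (0:ℝ) ≤ (m:ℝ) - i := by
    have : (i:ℝ) ≤ m := by exact_mod_cast him
    linarith
  set N := 10*m with hN
  set x : ℝ := (9*i)/(10*m) with hx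
  -- Step 1: introduce the tilt 1/10
  have step1 : (∑ k ∈ Finset.range i,
        (((N).choose k : ℝ) * ((i : ℝ) ^ k * ((m : ℝ) - i) ^ (N - k))))
      ≤ 10 ^ (i-1) * ∑ k ∈ Finset.range i,
        (((N).choose k : ℝ) * (((i : ℝ)/10) ^ k * ((m : ℝ) - i) ^ (N - k))) := by
    rw [Finset.mul_sum]
    refine Finset.sum_le_sum (fun k hk => ?_)
    have hk' : k ≤ i - 1 := by have := Finset.mem_range.1 hk; omega
    have h10 : (10:ℝ)^k ≤ 10^(i-1) := pow_le_pow_right₀ (by norm_num) hk'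
    have hnn : (0:ℝ) ≤ ((N).choose k : ℝ) * (((i : ℝ)/10) ^ k * ((m : ℝ) - i) ^ (N - k)) := by
      positivity
    calc ((N).choose k : ℝ) * ((i : ℝ) ^ k * ((m : ℝ) - i) ^ (N - k))
        = ((N).choose k : ℝ) * (((i : ℝ)/10) ^ k * ((m : ℝ) - i) ^ (N - k)) * 10^k := by
          rw [div_pow]; field_simp; try ring
      _ ≤ ((N).choose k : ℝ) * (((i : ℝ)/10) ^ k * ((m : ℝ) - i) ^ (N - k)) * 10^(i-1) :=
          mul_le_mul_of_nonneg_left h10 hnn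
      _ = 10 ^ (i-1) * (((N).choose k : ℝ) * (((i : ℝ)/10) ^ k * ((m : ℝ) - i) ^ (N - k))) := by
          ring
  -- Step 2: extend the sum
  have step2 : (∑ k ∈ Finset.range i,
        (((N).choose k : ℝ) * (((i : ℝ)/10) ^ k * ((m : ℝ) - i) ^ (N - k))))
      ≤ ∑ k ∈ Finset.range (N+1),
        (((N).choose k : ℝ) * (((i : ℝ)/10) ^ k * ((m : ℝ) - i) ^ (N - k))) := by
    apply Finset.sum_le_sum_of_subset_of_nonneg
    · exact Finset.range_subset_range.2 (by omega)
    · intro k _ _; positivity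
  -- Step 3: binomial theorem
  have step3 : (∑ k ∈ Finset.range (N+1),
        (((N).choose k : ℝ) * (((i : ℝ)/10) ^ k * ((m : ℝ) - i) ^ (N - k))))
      = ((i : ℝ)/10 + ((m : ℝ) - i)) ^ N := by
    rw [add_pow]
    exact Finset.sum_congr rfl (fun k _ => by ring)
  -- Step 4: exponential bound on the base
  have step4 : ((i : ℝ)/10 + ((m : ℝ) - i)) ^ N ≤ ((m:ℝ) * Real.exp (-x)) ^ N := by
    apply pow_le_pow_left₀ (by linarith [hmi, (by positivity : (0:ℝ) ≤ (i:ℝ)/10)])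
    have hexp : 1 - x ≤ Real.exp (-x) := by
      have := Real.add_one_le_exp (-x)
      linarith
    have hbase : (i : ℝ)/10 + ((m : ℝ) - i) = (m:ℝ) * (1 - x) := by
      rw [hx]; field_simp; ring
    rw [hbase]
    exact mul_le_mul_of_nonneg_left hexp (le_of_lt hmpos)
  -- Step 5: simplify
  have step5 : ((m:ℝ) * Real.exp (-x)) ^ N = (m:ℝ) ^ N * Real.exp (-(9*i)) := by
    rw [mul_pow, ← Real.exp_nat_mul]
    congr 1
    rw [hx, hN]
    push_cast
    field_simp
  calc (∑ k ∈ Finset.range i,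
        (((N).choose k : ℝ) * ((i : ℝ) ^ k * ((m : ℝ) - i) ^ (N - k))))
      ≤ 10 ^ (i-1) * ∑ k ∈ Finset.range i,
        (((N).choose k : ℝ) * (((i : ℝ)/10) ^ k * ((m : ℝ) - i) ^ (N - k))) := step1
    _ ≤ 10 ^ (i-1) * (((i : ℝ)/10 + ((m : ℝ) - i)) ^ N) := by
        apply mul_le_mul_of_nonneg_left _ (by positivity)
        rw [← step3]; exact step2
    _ ≤ 10 ^ (i-1) * (((m:ℝ) * Real.exp (-x)) ^ N) :=
        mul_le_mul_of_nonneg_left step4 (by positivity)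
    _ = 10 ^ (i-1) * Real.exp (-(9*i)) * (m : ℝ) ^ N := by rw [step5]; ring

lemma aux_exp9 : (2000:ℝ) ≤ Real.exp 9 := by
  have h1 : (2.7:ℝ) ≤ Real.exp 1 := le_of_lt (by linarith [Real.exp_one_gt_d9])
  have h2 : Real.exp 9 = Real.exp 1 ^ 9 := by
    rw [← Real.exp_nat_mul]; norm_num
  have h3 : (2.7:ℝ) ^ 9 ≤ Real.exp 1 ^ 9 := pow_le_pow_left₀ (by norm_num) h1 9
  have h4 : (2000:ℝ) ≤ (2.7:ℝ) ^ 9 := by norm_num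
  linarith [h2 ▸ h3]

lemma aux_geom (m : ℕ) (hm : 1 ≤ m) :
    ∑ i ∈ Finset.Icc 1 m, (10:ℝ) ^ (i-1) * Real.exp (-(9*(i:ℝ))) ≤ 1/1000 := by
  have hexp9 : Real.exp (-(9:ℝ)) ≤ 1/2000 := by
    rw [Real.exp_neg]
    rw [inv_le_iff_one_le_mul₀ (Real.exp_pos 9)] at *
    · nlinarith [aux_exp9]
  have hexp9pos : (0:ℝ) < Real.exp (-(9:ℝ)) := Real.exp_pos _
  set r : ℝ := 10 * Real.exp (-(9:ℝ)) with hr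
  have hr0 : 0 ≤ r := by positivity
  have hr1 : r ≤ 1/200 := by rw [hr]; linarith
  -- rewrite each term
  have hterm : ∀ i ∈ Finset.Icc 1 m,
      (10:ℝ) ^ (i-1) * Real.exp (-(9*(i:ℝ))) = r ^ (i-1) * Real.exp (-(9:ℝ)) := by
    intro i hi
    have hi1 : 1 ≤ i := (Finset.mem_Icc.1 hi).1
    have h5 : Real.exp (-(9*(i:ℝ))) = Real.exp (-(9:ℝ)) ^ i := by
      rw [← Real.exp_nat_mul]; congr 1; ring
    have h6 : Real.exp (-(9:ℝ)) ^ i = Real.exp (-(9:ℝ)) ^ (i-1) * Real.exp (-(9:ℝ)) := by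
      rw [← pow_succ]; congr 1; omega
    rw [h5, h6, hr, mul_pow]; ring
  rw [Finset.sum_congr rfl hterm]
  have hIcc : Finset.Icc 1 m = Finset.Ico 1 (m+1) := by rw [Finset.Ico_add_one_right_eq_Icc]
  rw [hIcc, Finset.sum_Ico_eq_sum_range]
  simp only [Nat.add_sub_cancel_left, add_tsub_cancel_left]
  have hsum : ∑ t ∈ Finset.range (m+1-1), r ^ t ≤ 2 := by
    have hm1 : m + 1 - 1 = m := by omega
    rw [hm1]
    have hrne : r ≠ 1 := by intro h; rw [h] at hr1; norm_num at hr1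
    rw [geom_sum_eq hrne]
    have hrm : 0 ≤ r ^ m := by positivity
    have h1r : (199:ℝ)/200 ≤ 1 - r := by linarith
    have hflip : (r ^ m - 1) / (r - 1) = (1 - r ^ m) / (1 - r) := by
      rw [← neg_div_neg_eq]; ring_nf
    rw [hflip, div_le_iff₀ (by linarith : (0:ℝ) < 1 - r)]
    nlinarith [pow_le_one₀ hr0 (by linarith : r ≤ 1) (n := m)]
  calc ∑ t ∈ Finset.range (m+1-1), r ^ t * Real.exp (-(9:ℝ))
      = (∑ t ∈ Finset.range (m+1-1), r ^ t) * Real.exp (-(9:ℝ)) := by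
        rw [Finset.sum_mul]
    _ ≤ 2 * (1/2000) := by
        apply mul_le_mul hsum hexp9 (le_of_lt hexp9pos)
        norm_num
    _ ≤ 1/1000 := by norm_num

end StmtAux

/-- the probabilistic core of the proof of Lemma D.1 of the
paper.  Let `T_1, …, T_{10m}` be i.i.d. uniform on `{1,…,m}` (encoded as
`T : Fin (10m) → Fin m`, the value of `T_j` being `(T j) + 1`), and for
`i ∈ {1,…,m}` let `S_i = #{j : T_j ≤ i}`.  Then
`P(S_i ≥ i for all i) ≥ 0.97`; the probability is the number of favourable
outcomes divided by `m^{10m}`. -/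
theorem stmt15 (m : ℕ) (hm : 1 ≤ m) :
    (0.97 : ℝ) ≤
      ((Finset.univ.filter (fun T : Fin (10*m) → Fin m =>
            ∀ i ∈ Finset.Icc 1 m,
              i ≤ (Finset.univ.filter (fun j => (T j : ℕ) + 1 ≤ i)).card)).card : ℝ)
        / (m : ℝ) ^ (10*m) := by
  classical
  have hm0 : (0:ℝ) < m := by exact_mod_cast hm
  have hpos : (0:ℝ) < (m:ℝ) ^ (10*m) := by positivity
  set p : (Fin (10*m) → Fin m) → Prop := fun T =>
    ∀ i ∈ Finset.Icc 1 m, i ≤ (Finset.univ.filter (fun j => (T j : ℕ) + 1 ≤ i)).card with hp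
  set G := (Finset.univ : Finset (Fin (10*m) → Fin m)).filter p with hG
  set B := (Finset.univ : Finset (Fin (10*m) → Fin m)).filter (fun T => ¬ p T) with hB
  have hsplit : G.card + B.card = m ^ (10*m) := by
    rw [hG, hB, Finset.card_filter_add_card_filter_not (p := p), Finset.card_univ,
      Fintype.card_fun, Fintype.card_fin, Fintype.card_fin]
  have hBsub : B ⊆ (Finset.Icc 1 m).biUnion (fun i =>
      (Finset.univ : Finset (Fin (10*m) → Fin m)).filter
        (fun T => (Finset.univ.filter (fun j => (T j : ℕ) + 1 ≤ i)).card < i)) := by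
    intro T hT
    rw [hB, Finset.mem_filter] at hT
    obtain ⟨-, hT⟩ := hT
    simp only [hp, not_forall, not_le, exists_prop] at hT
    obtain ⟨i, hi, hlt⟩ := hT
    exact Finset.mem_biUnion.2 ⟨i, hi, Finset.mem_filter.2 ⟨Finset.mem_univ _, hlt⟩⟩
  have hBcard : B.card ≤ ∑ i ∈ Finset.Icc 1 m, ∑ k ∈ Finset.range i,
      (10*m).choose k * (i ^ k * (m - i) ^ (10*m - k)) :=
    le_trans (Finset.card_le_card hBsub) (le_trans Finset.card_biUnion_le
      (Finset.sum_le_sum (fun i hi => aux_card_bad (10*m) m i (Finset.mem_Icc.1 hi).2)))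
  have hBreal : (B.card : ℝ) ≤ (1/1000) * (m:ℝ) ^ (10*m) := by
    calc (B.card : ℝ)
        ≤ ((∑ i ∈ Finset.Icc 1 m, ∑ k ∈ Finset.range i,
            (10*m).choose k * (i ^ k * (m - i) ^ (10*m - k)) : ℕ) : ℝ) := by
          exact_mod_cast hBcard
      _ = ∑ i ∈ Finset.Icc 1 m, ∑ k ∈ Finset.range i,
            (((10*m).choose k : ℝ) * ((i : ℝ) ^ k * ((m : ℝ) - i) ^ (10*m - k))) := by
          rw [Nat.cast_sum]
          refine Finset.sum_congr rfl (fun i hi => ?_)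
          rw [Nat.cast_sum]
          refine Finset.sum_congr rfl (fun k _ => ?_)
          have him : i ≤ m := (Finset.mem_Icc.1 hi).2
          push_cast [Nat.cast_sub him]
          ring
      _ ≤ ∑ i ∈ Finset.Icc 1 m, 10 ^ (i-1) * Real.exp (-(9*(i:ℝ))) * (m : ℝ) ^ (10*m) :=
          Finset.sum_le_sum (fun i hi =>
            aux_real m i hm (Finset.mem_Icc.1 hi).1 (Finset.mem_Icc.1 hi).2)
      _ = (∑ i ∈ Finset.Icc 1 m, 10 ^ (i-1) * Real.exp (-(9*(i:ℝ)))) * (m : ℝ) ^ (10*m) := by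
          rw [Finset.sum_mul]
      _ ≤ (1/1000) * (m:ℝ) ^ (10*m) :=
          mul_le_mul_of_nonneg_right (aux_geom m hm) (le_of_lt hpos)
  rw [le_div_iff₀ hpos]
  have hcast : (G.card : ℝ) + (B.card : ℝ) = (m:ℝ) ^ (10*m) := by
    exact_mod_cast congrArg (Nat.cast : ℕ → ℝ) hsplit
  have hGg : (Finset.univ.filter (fun T : Fin (10*m) → Fin m =>
            ∀ i ∈ Finset.Icc 1 m,
              i ≤ (Finset.univ.filter (fun j => (T j : ℕ) + 1 ≤ i)).card)) = G := by
    rw [hG]; congr! 1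
  rw [hGg]
  linarith
end

section
/- Let N ≥ 9 be an integer and set m = ⌊(N+1)/10⌋. Let i_1, …, i_{N+1} be i.i.d. uniform random variables on {1, …, m}. Then with probability at least 0.97 there exists a permutation π of {1, …, N+1} such that i_{π(t)} ≤ t for every t ∈ {1, …, N+1}. -/
/-!
Sort `v` increasingly: if some sorted value exceeds its position `t`, then at most `t` of the
values are `≤ t`. So a bad outcome has some threshold `k < m` with `#{s | v s ≤ k} ≤ k`. For a
fixed `k` this count is binomial with mean `n (k + 1) / m ≥ 10 (k + 1)`, and the exponential
moment bound `P(X ≤ k) ≤ 10^k E[10^{-X}]` makes the probability at most `(10 e^{-9})^{k+1}`,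
whose sum over `k` is below `1/49`.
-/

open Finset

theorem Fin.exists_perm_le_of_lt_card_filter_le {n : ℕ} (v : Fin n → ℕ)
    (h : ∀ t : Fin n, (t : ℕ) < #{s | v s ≤ t}) :
    ∃ σ : Equiv.Perm (Fin n), ∀ t, v (σ t) ≤ t := by
  refine ⟨Tuple.sort v, fun t => ?_⟩
  by_contra! hlt
  have hmaps : ∀ s ∈ ({s | v s ≤ t} : Finset (Fin n)), (Tuple.sort v).symm s ∈ Iio t := by
    intro s hs
    rw [mem_filter] at hs
    rw [mem_Iio]
    by_contra! hts
    have := Tuple.monotone_sort v hts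
    simp only [Function.comp_apply, Equiv.apply_symm_apply] at this
    omega
  have := card_le_card_of_injOn _ hmaps (Tuple.sort v).symm.injective.injOn
  rw [Fin.card_Iio] at this
  exact (h t).not_ge this

theorem exists_card_filter_le_of_not_exists_perm {n m : ℕ} (v : Fin n → Fin m)
    (h : ¬ ∃ σ : Equiv.Perm (Fin n), ∀ t, (v (σ t) : ℕ) ≤ t) :
    ∃ k < m, #{s | (v s : ℕ) ≤ k} ≤ k := by
  by_contra! hk
  refine h (Fin.exists_perm_le_of_lt_card_filter_le (fun s => v s) fun t => ?_)
  by_cases htm : (t : ℕ) < m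
  · exact hk t htm
  · have : ({s | (v s : ℕ) ≤ t} : Finset (Fin n)) = univ :=
      filter_true_of_mem fun s _ => by omega
    simp [this]

section Chernoff

variable {ι α : Type*} [Fintype ι] [DecidableEq ι] [Fintype α] (p : α → Prop) [DecidablePred p]

theorem sum_pow_card_filter (x : ℝ) :
    ∑ v : ι → α, x ^ #{s | p (v s)} =
      (Fintype.card α - (1 - x) * #{a | p a}) ^ Fintype.card ι := by
  have hfactor (v : ι → α) : x ^ #{s | p (v s)} = ∏ s, if p (v s) then x else 1 := by
    rw [prod_ite, prod_const, prod_const_one, mul_one]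
  have hsum : ∑ a : α, (if p a then x else 1) = Fintype.card α - (1 - x) * #{a | p a} := by
    have hcard := card_filter_add_card_filter_not (s := (univ : Finset α)) p
    rw [sum_ite, sum_const, sum_const, ← card_univ, ← hcard]
    simp only [nsmul_eq_mul, mul_one, Nat.cast_add]
    ring
  simp_rw [hfactor, ← Fintype.prod_sum (fun (_ : ι) (a : α) => if p a then x else 1), hsum,
    prod_const, card_univ]

theorem card_filter_card_filter_le_mul_pow_le (k : ℕ) {x : ℝ} (hx₀ : 0 ≤ x) (hx₁ : x ≤ 1) :
    #{v : ι → α | #{s | p (v s)} ≤ k} * x ^ k ≤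
      (Fintype.card α - (1 - x) * #{a | p a}) ^ Fintype.card ι := by
  rw [← sum_pow_card_filter, ← nsmul_eq_mul]
  calc #{v : ι → α | #{s | p (v s)} ≤ k} • x ^ k
      ≤ ∑ v ∈ {v : ι → α | #{s | p (v s)} ≤ k}, x ^ #{s | p (v s)} :=
        card_nsmul_le_sum _ _ _ fun v hv => pow_le_pow_of_le_one hx₀ hx₁ (mem_filter.1 hv).2
    _ ≤ ∑ v : ι → α, x ^ #{s | p (v s)} :=
        sum_le_sum_of_subset_of_nonneg (subset_univ _) fun v _ _ => pow_nonneg hx₀ _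

end Chernoff

theorem sub_pow_le_pow_mul_exp {a b : ℝ} (hb : 0 < b) (ha : a ≤ b) (n : ℕ) :
    (b - a) ^ n ≤ b ^ n * Real.exp (-(a * n / b)) := by
  have hsub : b - a ≤ b * Real.exp (-(a / b)) := by
    calc b - a = b * (1 - a / b) := by field_simp
      _ ≤ b * Real.exp (-(a / b)) := by gcongr; exact Real.one_sub_le_exp_neg _
  calc (b - a) ^ n ≤ (b * Real.exp (-(a / b))) ^ n := pow_le_pow_left₀ (by linarith) hsub n
    _ = b ^ n * Real.exp (-(a * n / b)) := by
      rw [mul_pow, ← Real.exp_nat_mul]; ring_nf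

theorem ten_mul_exp_neg_nine_le : 10 * Real.exp (-9) ≤ 1 / 50 := by
  have h : 2 ^ 9 ≤ Real.exp 9 := by
    calc (2:ℝ) ^ 9 ≤ Real.exp 1 ^ 9 := by
          gcongr; linarith [Real.add_one_le_exp 1]
      _ = Real.exp 9 := by rw [← Real.exp_nat_mul]; norm_num
  rw [Real.exp_neg, ← div_eq_mul_inv, div_le_div_iff₀ (Real.exp_pos 9) (by norm_num)]
  linarith

theorem card_filter_card_filter_val_le_le {n m k : ℕ} (hk : k < m) (hn : 10 * m ≤ n) :
    (#{v : Fin n → Fin m | #{s | (v s : ℕ) ≤ k} ≤ k} : ℝ) ≤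
      (10 * Real.exp (-9)) ^ (k + 1) * m ^ n := by
  have hlow : #{a : Fin m | (a : ℕ) ≤ k} = k + 1 := by
    simp_rw [← Nat.lt_succ_iff, Fin.card_filter_val_lt]
    omega
  have hmarkov := card_filter_card_filter_le_mul_pow_le (ι := Fin n)
    (fun a : Fin m => (a : ℕ) ≤ k) k (x := 1 / 10) (by norm_num) (by norm_num)
  simp only [hlow, Fintype.card_fin] at hmarkov
  have hm : (0 : ℝ) < m := by exact_mod_cast (k.zero_le.trans_lt hk)
  have hkm : ((k + 1 : ℕ) : ℝ) ≤ m := by exact_mod_cast hk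
  have hexp := sub_pow_le_pow_mul_exp hm (a := (1 - 1 / 10) * ((k + 1 : ℕ) : ℝ)) (by linarith) n
  have hdecay : Real.exp (-((1 - 1 / 10) * ((k + 1 : ℕ) : ℝ) * n / m)) ≤
      Real.exp (-9) ^ (k + 1) := by
    have hn' : 10 * (m : ℝ) ≤ n := by exact_mod_cast hn
    have : 9 * ((k + 1 : ℕ) : ℝ) ≤ (1 - 1 / 10) * ((k + 1 : ℕ) : ℝ) * n / m := by
      rw [le_div_iff₀ hm]; nlinarith
    rw [← Real.exp_nat_mul, Real.exp_le_exp]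
    linarith
  have hbound : (#{v : Fin n → Fin m | #{s | (v s : ℕ) ≤ k} ≤ k} : ℝ) * (1 / 10) ^ k ≤
      m ^ n * Real.exp (-9) ^ (k + 1) :=
    hmarkov.trans (hexp.trans (mul_le_mul_of_nonneg_left hdecay (by positivity)))
  calc (#{v : Fin n → Fin m | #{s | (v s : ℕ) ≤ k} ≤ k} : ℝ)
      = (#{v : Fin n → Fin m | #{s | (v s : ℕ) ≤ k} ≤ k} * (1 / 10) ^ k) * 10 ^ k := by
        rw [mul_assoc, ← mul_pow]; norm_num
    _ ≤ m ^ n * Real.exp (-9) ^ (k + 1) * 10 ^ (k + 1) := by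
        gcongr
        · norm_num
        · omega
    _ = (10 * Real.exp (-9)) ^ (k + 1) * m ^ n := by ring

theorem card_filter_not_exists_perm_le {n m : ℕ} (hn : 10 * m ≤ n) :
    (#{v : Fin n → Fin m | ¬ ∃ σ : Equiv.Perm (Fin n), ∀ t, (v (σ t) : ℕ) ≤ t} : ℝ) ≤
      m ^ n / 49 := by
  have hsub : ({v : Fin n → Fin m | ¬ ∃ σ : Equiv.Perm (Fin n), ∀ t, (v (σ t) : ℕ) ≤ t} :
      Finset _) ⊆
      (range m).biUnion fun k => {v : Fin n → Fin m | #{s | (v s : ℕ) ≤ k} ≤ k} := by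
    intro v hv
    obtain ⟨k, hk, hcard⟩ := exists_card_filter_le_of_not_exists_perm v (mem_filter.1 hv).2
    exact mem_biUnion.2 ⟨k, mem_range.2 hk, mem_filter.2 ⟨mem_univ v, hcard⟩⟩
  calc (#{v : Fin n → Fin m | ¬ ∃ σ : Equiv.Perm (Fin n), ∀ t, (v (σ t) : ℕ) ≤ t} : ℝ)
      ≤ ∑ k ∈ range m, (#{v : Fin n → Fin m | #{s | (v s : ℕ) ≤ k} ≤ k} : ℝ) := by
        exact_mod_cast (card_le_card hsub).trans card_biUnion_le
    _ ≤ ∑ k ∈ range m, (1 / 50 : ℝ) ^ (k + 1) * m ^ n := by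
        refine sum_le_sum fun k hk =>
          (card_filter_card_filter_val_le_le (mem_range.1 hk) hn).trans ?_
        gcongr
        exact ten_mul_exp_neg_nine_le
    _ = 1 / 50 * (∑ k ∈ range m, (1 / 50 : ℝ) ^ k) * m ^ n := by
        rw [mul_sum, sum_mul]
        exact sum_congr rfl fun k _ => by ring
    _ ≤ 1 / 50 * ((1 / 50) ^ 0 / (1 - 1 / 50)) * m ^ n := by
        rw [range_eq_Ico]
        gcongr
        exact geom_sum_Ico_le_of_lt_one (by norm_num) (by norm_num)
    _ = m ^ n / 49 := by ring

/-- Lemma D.1 of the paper, random construction, in index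
form.  Let `N ≥ 9`, `m = ⌊(N+1)/10⌋` and `i_1, …, i_{N+1}` i.i.d. uniform on
`{1,…,m}` (encoded as `v : Fin (N+1) → Fin m`, the value of `i_t` being
`(v t) + 1`).  Then with probability at least `0.97` there is a permutation `π`
of `{1,…,N+1}` such that `i_{π(t)} ≤ t` for every `t`; the probability is the
number of favourable outcomes divided by `m^{N+1}`. -/
theorem stmt16 (N : ℕ) (hN : 9 ≤ N) :
    (0.97 : ℝ) ≤
      ((Finset.univ.filter (fun v : Fin (N+1) → Fin ((N+1)/10) =>
            ∃ π : Equiv.Perm (Fin (N+1)),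
              ∀ t : Fin (N+1), (v (π t) : ℕ) + 1 ≤ (t : ℕ) + 1)).card : ℝ)
        / (((N+1)/10 : ℕ) : ℝ) ^ (N+1) := by
  have hm : (0 : ℝ) < ((N + 1) / 10 : ℕ) := by exact_mod_cast (by omega : 0 < (N + 1) / 10)
  have hbad := card_filter_not_exists_perm_le (Nat.mul_div_le (N + 1) 10)
  simp_rw [Nat.add_le_add_iff_right]
  have hsplit := card_filter_add_card_filter_not (s := univ)
    fun v : Fin (N + 1) → Fin ((N + 1) / 10) =>
      ∃ π : Equiv.Perm (Fin (N + 1)), ∀ t, (v (π t) : ℕ) ≤ t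
  rw [card_univ, Fintype.card_fun, Fintype.card_fin, Fintype.card_fin] at hsplit
  rw [le_div_iff₀ (by positivity)]
  have hsplit_real := congrArg (Nat.cast : ℕ → ℝ) hsplit
  push_cast at hsplit_real
  linarith
end
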